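/- If ≺_o is a strict partial order on E, ≺_t is the strict weak ordering induced by a timestamp function time : E → T (e1 ≺_t e2 iff time(e1) < time(e2)), and the consistency condition holds (e1 ≺_o e2 implies time(e1) ≤ time(e2)), then the union ≺_ot = ≺_o ∪ ≺_t is a strict partial order (irreflexive, transitive, asymmetric). -/
import Mathlib

theorem union_strict_partial_order_of_consistent
    {E T : Type*} [LinearOrder T] (time : E → T) (o : E → E → Prop)
    (hirr : ∀ e : E, ¬ o e e)
    (htrans : ∀ e1 e2 e3 : E, o e1 e2 → o e2 e3 → o e1 e3)
    (hasymm : ∀ e1 e2 : E, o e1 e2 → ¬ o e2 e1)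
    (hcons : ∀ e1 e2 : E, o e1 e2 → time e1 ≤ time e2) :
    (∀ e : E, ¬ (o e e ∨ time e < time e)) ∧
    (∀ e1 e2 e3 : E, (o e1 e2 ∨ time e1 < time e2) →
      (o e2 e3 ∨ time e2 < time e3) → (o e1 e3 ∨ time e1 < time e3)) ∧
    (∀ e1 e2 : E, (o e1 e2 ∨ time e1 < time e2) →
      ¬ (o e2 e1 ∨ time e2 < time e1)) := by
  refine ⟨fun e h => ?_, fun e1 e2 e3 h12 h23 => ?_, fun e1 e2 h12 h21 => ?_⟩
  · rcases h with h | h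
    · exact hirr e h
    · exact lt_irrefl _ h
  · rcases h12 with h12 | h12 <;> rcases h23 with h23 | h23
    · exact Or.inl (htrans _ _ _ h12 h23)
    · exact Or.inr (lt_of_le_of_lt (hcons _ _ h12) h23)
    · exact Or.inr (lt_of_lt_of_le h12 (hcons _ _ h23))
    · exact Or.inr (h12.trans h23)
  · rcases h12 with h12 | h12 <;> rcases h21 with h21 | h21
    · exact hasymm _ _ h12 h21
    · exact absurd (hcons _ _ h12) (not_le.mpr h21)
    · exact absurd (hcons _ _ h21) (not_le.mpr h12)
    · exact lt_asymm h12 h21
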